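/- arXiv:2412.19462 — 2 statements merged into one kernel-verified Lean document; each statement's English description precedes it below -/
import Mathlib

section
/- Let r̄ ∈ ℝⁿ and suppose ε > r̄ᵀΣ⁻¹r̄ − (r̄ᵀΣ⁻¹e)²/β. Set D = √( (r̄ᵀΣ⁻¹e)² − β(r̄ᵀΣ⁻¹r̄ − ε) ). Then the vector x_WVaR = x_MIN + (Σ⁻¹ − Σ⁻¹e eᵀΣ⁻¹/β) r̄ / D is a minimizer of the function x ↦ √ε·√(xᵀΣx) − r̄ᵀx over C, and the minimum value equals ( −r̄ᵀΣ⁻¹e + D ) / β. -/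
/-!
Write `a = r̄ᵀΣ⁻¹e` and `g = Σ x_WVaR = e/β + (r̄ − (a/β) e)/D`. On `C` the return is affine in
`yᵀg`, namely `r̄ᵀy = D yᵀΣx_WVaR + (a − D)/β`, so the objective equals
`√ε √(yᵀΣy) − D yᵀΣx_WVaR + (D − a)/β`. The choice of `D` is exactly what makes
`D² x_WVaRᵀΣx_WVaR = ε`, so by Cauchy–Schwarz for the inner product `Σ` the first two terms are
nonnegative, and they cancel at `y = x_WVaR`.
-/

open Matrix

variable {ι : Type*} [Fintype ι]

lemma Matrix.IsSymm.dotProduct_mulVec_comm {A : Matrix ι ι ℝ} (hA : A.IsSymm) (x y : ι → ℝ) :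
    x ⬝ᵥ A *ᵥ y = y ⬝ᵥ A *ᵥ x := by
  rw [dotProduct_mulVec, ← mulVec_transpose, hA.eq, dotProduct_comm]

namespace Matrix.PosSemidef

variable {A : Matrix ι ι ℝ} (hA : A.PosSemidef)
include hA

lemma dotProduct_mulVec_self_nonneg (x : ι → ℝ) : 0 ≤ x ⬝ᵥ A *ᵥ x :=
  star_trivial x ▸ hA.dotProduct_mulVec_nonneg x

lemma dotProduct_mulVec_sq_le (x y : ι → ℝ) :
    (x ⬝ᵥ A *ᵥ y) ^ 2 ≤ (x ⬝ᵥ A *ᵥ x) * (y ⬝ᵥ A *ᵥ y) := by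
  classical
  have hsymm : A.IsSymm := isHermitian_iff_isSymm.mp hA.isHermitian
  simpa only [toBilin'_apply'] using (toBilin' A).apply_sq_le_of_symm
    (fun z => by simpa only [toBilin'_apply'] using hA.dotProduct_mulVec_self_nonneg z)
    (LinearMap.BilinForm.isSymm_iff.mp (isSymm_toBilin'_iff_isSymm.mpr hsymm)) x y

lemma dotProduct_mulVec_le_sqrt_mul_sqrt (x y : ι → ℝ) :
    x ⬝ᵥ A *ᵥ y ≤ √(x ⬝ᵥ A *ᵥ x) * √(y ⬝ᵥ A *ᵥ y) := by
  rw [← Real.sqrt_mul (hA.dotProduct_mulVec_self_nonneg x)]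
  exact (le_abs_self _).trans (Real.abs_le_sqrt (hA.dotProduct_mulVec_sq_le x y))

lemma mul_dotProduct_mulVec_le_sqrt_mul_sqrt {x : ι → ℝ} {D ε : ℝ} (hD : 0 ≤ D)
    (hx : D ^ 2 * (x ⬝ᵥ A *ᵥ x) = ε) (y : ι → ℝ) : D * (y ⬝ᵥ A *ᵥ x) ≤ √ε * √(y ⬝ᵥ A *ᵥ y) := by
  have hsqrt : √ε = D * √(x ⬝ᵥ A *ᵥ x) := by
    rw [← hx, Real.sqrt_mul (sq_nonneg D), Real.sqrt_sq hD]
  calc D * (y ⬝ᵥ A *ᵥ x) ≤ D * (√(y ⬝ᵥ A *ᵥ y) * √(x ⬝ᵥ A *ᵥ x)) :=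
        mul_le_mul_of_nonneg_left (hA.dotProduct_mulVec_le_sqrt_mul_sqrt y x) hD
    _ = √ε * √(y ⬝ᵥ A *ᵥ y) := by rw [hsqrt]; ring

lemma sqrt_mul_sqrt_dotProduct_mulVec_self {x : ι → ℝ} {D ε : ℝ} (hD : 0 ≤ D)
    (hx : D ^ 2 * (x ⬝ᵥ A *ᵥ x) = ε) :
    √ε * √(x ⬝ᵥ A *ᵥ x) = D * (x ⬝ᵥ A *ᵥ x) := by
  rw [← hx, Real.sqrt_mul (sq_nonneg D), Real.sqrt_sq hD, mul_assoc,
    Real.mul_self_sqrt (hA.dotProduct_mulVec_self_nonneg x)]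

end Matrix.PosSemidef

/-- `Σ x_WVaR`, written with `a = r̄ᵀΣ⁻¹e`. -/
noncomputable def wvarGradient (e r : ι → ℝ) (β a D : ℝ) : ι → ℝ :=
  β⁻¹ • e + D⁻¹ • (r - (β⁻¹ * a) • e)

lemma dotProduct_eq_mul_dotProduct_wvarGradient_add {e r y : ι → ℝ} {β a D : ℝ} (hD : D ≠ 0)
    (hy : e ⬝ᵥ y = 1) : r ⬝ᵥ y = D * (y ⬝ᵥ wvarGradient e r β a D) + (a - D) / β := by
  rw [dotProduct_comm] at hy
  simp only [wvarGradient, dotProduct_add, dotProduct_sub, dotProduct_smul, smul_eq_mul, hy,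
    dotProduct_comm y r]
  field_simp
  ring

namespace Matrix.IsSymm

variable {B : Matrix ι ι ℝ} (hB : B.IsSymm)
include hB

lemma smul_mulVec_add_smul_mulVec_eq (e r : ι → ℝ) (β D : ℝ) :
    β⁻¹ • (B *ᵥ e) + D⁻¹ • ((B - β⁻¹ • vecMulVec (B *ᵥ e) (e ᵥ* B)) *ᵥ r) =
      B *ᵥ wvarGradient e r β (r ⬝ᵥ B *ᵥ e) D := by
  rw [wvarGradient, sub_mulVec, smul_mulVec, vecMulVec_mulVec, ← dotProduct_mulVec,
    hB.dotProduct_mulVec_comm e r]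
  simp only [mulVec_add, mulVec_smul, mulVec_sub, op_smul_eq_smul, smul_smul]

variable {e r : ι → ℝ} {β : ℝ}

lemma dotProduct_mulVec_wvarGradient (hβ : β = e ⬝ᵥ B *ᵥ e) (hβ0 : β ≠ 0) (D : ℝ) :
    e ⬝ᵥ B *ᵥ wvarGradient e r β (r ⬝ᵥ B *ᵥ e) D = 1 := by
  simp only [wvarGradient, mulVec_add, mulVec_smul, mulVec_sub, dotProduct_add, dotProduct_sub,
    dotProduct_smul, smul_eq_mul, ← hβ, hB.dotProduct_mulVec_comm e r]
  field_simp
  ring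

lemma sq_mul_wvarGradient_dotProduct_mulVec_self (hβ : β = e ⬝ᵥ B *ᵥ e) (hβ0 : β ≠ 0)
    {D ε : ℝ} (hD : D ≠ 0) (hD2 : D ^ 2 = (r ⬝ᵥ B *ᵥ e) ^ 2 - β * (r ⬝ᵥ B *ᵥ r - ε)) :
    D ^ 2 * (wvarGradient e r β (r ⬝ᵥ B *ᵥ e) D ⬝ᵥ B *ᵥ
      wvarGradient e r β (r ⬝ᵥ B *ᵥ e) D) = ε := by
  simp only [wvarGradient, mulVec_add, mulVec_smul, mulVec_sub, dotProduct_add, dotProduct_sub,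
    add_dotProduct, sub_dotProduct, smul_dotProduct, dotProduct_smul, smul_eq_mul, ← hβ,
    hB.dotProduct_mulVec_comm e r]
  field_simp
  linear_combination hD2

end Matrix.IsSymm

theorem stmt6_general (n : ℕ) (hn : 1 ≤ n) (A : Matrix (Fin n) (Fin n) ℝ)
    (hA : A.PosDef)
    (e : Fin n → ℝ) (he : e = fun _ => 1)
    (β : ℝ) (hβ : β = e ⬝ᵥ A⁻¹ *ᵥ e)
    (xMIN : Fin n → ℝ) (hxMIN : xMIN = β⁻¹ • (A⁻¹ *ᵥ e))
    (rbar : Fin n → ℝ) (ε : ℝ)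
    (hε : rbar ⬝ᵥ A⁻¹ *ᵥ rbar - (rbar ⬝ᵥ A⁻¹ *ᵥ e) ^ 2 / β < ε)
    (D : ℝ)
    (hD : D = Real.sqrt ((rbar ⬝ᵥ A⁻¹ *ᵥ e) ^ 2 - β * (rbar ⬝ᵥ A⁻¹ *ᵥ rbar - ε)))
    (xWVaR : Fin n → ℝ)
    (hxWVaR : xWVaR = xMIN +
        D⁻¹ • ((A⁻¹ - β⁻¹ • vecMulVec (A⁻¹ *ᵥ e) (e ᵥ* A⁻¹)) *ᵥ rbar)) :
    e ⬝ᵥ xWVaR = 1 ∧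
    (∀ y : Fin n → ℝ, e ⬝ᵥ y = 1 →
      Real.sqrt ε * Real.sqrt (xWVaR ⬝ᵥ A *ᵥ xWVaR) - rbar ⬝ᵥ xWVaR ≤
        Real.sqrt ε * Real.sqrt (y ⬝ᵥ A *ᵥ y) - rbar ⬝ᵥ y) ∧
    Real.sqrt ε * Real.sqrt (xWVaR ⬝ᵥ A *ᵥ xWVaR) - rbar ⬝ᵥ xWVaR =
      (-(rbar ⬝ᵥ A⁻¹ *ᵥ e) + D) / β := by
  have hBs : A⁻¹.IsSymm := isHermitian_iff_isSymm.mp hA.inv.isHermitian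
  have hβpos : 0 < β := by
    have he0 : e ≠ 0 := fun h => by simpa [he] using congrFun h ⟨0, hn⟩
    simpa [hβ] using hA.inv.dotProduct_mulVec_pos he0
  have hD2pos : 0 < (rbar ⬝ᵥ A⁻¹ *ᵥ e) ^ 2 - β * (rbar ⬝ᵥ A⁻¹ *ᵥ rbar - ε) := by
    rw [sub_div' hβpos.ne', div_lt_iff₀ hβpos] at hε
    linarith
  have hDpos : 0 < D := hD ▸ Real.sqrt_pos.mpr hD2pos
  have hD2 : D ^ 2 = _ := hD ▸ Real.sq_sqrt hD2pos.le
  rw [hxMIN, hBs.smul_mulVec_add_smul_mulVec_eq] at hxWVaR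
  set g := wvarGradient e rbar β (rbar ⬝ᵥ A⁻¹ *ᵥ e) D
  have hAx (y : Fin n → ℝ) : y ⬝ᵥ A *ᵥ xWVaR = y ⬝ᵥ g := by
    rw [hxWVaR, mulVec_mulVec, mul_nonsing_inv _ (isUnit_iff_ne_zero.mpr hA.det_pos.ne'),
      one_mulVec]
  have hxAx : D ^ 2 * (xWVaR ⬝ᵥ A *ᵥ xWVaR) = ε := by
    rw [hAx, hxWVaR, dotProduct_comm]
    exact hBs.sq_mul_wvarGradient_dotProduct_mulVec_self hβ hβpos.ne' hDpos.ne' hD2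
  have hex : e ⬝ᵥ xWVaR = 1 := hxWVaR ▸ hBs.dotProduct_mulVec_wvarGradient hβ hβpos.ne' D
  have hobj (y : Fin n → ℝ) (hy : e ⬝ᵥ y = 1) : √ε * √(y ⬝ᵥ A *ᵥ y) - rbar ⬝ᵥ y =
      (√ε * √(y ⬝ᵥ A *ᵥ y) - D * (y ⬝ᵥ A *ᵥ xWVaR)) + (D - rbar ⬝ᵥ A⁻¹ *ᵥ e) / β := by
    rw [dotProduct_eq_mul_dotProduct_wvarGradient_add (β := β) (a := rbar ⬝ᵥ A⁻¹ *ᵥ e)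
      hDpos.ne' hy, hAx]
    ring
  have hmin := hA.posSemidef.mul_dotProduct_mulVec_le_sqrt_mul_sqrt hDpos.le hxAx
  have hzero := hA.posSemidef.sqrt_mul_sqrt_dotProduct_mulVec_self hDpos.le hxAx
  refine ⟨hex, fun y hy => ?_, ?_⟩
  · rw [hobj _ hex, hobj y hy, hzero]
    linarith [hmin y]
  · rw [hobj _ hex, hzero]
    ring

/-- when `ε > r̄ᵀΣ⁻¹r̄ − (r̄ᵀΣ⁻¹e)²/β` and
`D = √((r̄ᵀΣ⁻¹e)² − β(r̄ᵀΣ⁻¹r̄ − ε))`, the vector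
`x_WVaR = x_MIN + (Σ⁻¹ − Σ⁻¹e eᵀΣ⁻¹/β) r̄ / D` minimizes
`x ↦ √ε √(xᵀΣx) − r̄ᵀx` over `C`, with minimum value `(−r̄ᵀΣ⁻¹e + D)/β`. -/
theorem stmt6 (n : ℕ) (hn : 1 ≤ n) (A : Matrix (Fin n) (Fin n) ℝ)
    (hA : A.PosDef) (hAs : A.IsSymm)
    (e : Fin n → ℝ) (he : e = fun _ => 1)
    (β : ℝ) (hβ : β = e ⬝ᵥ A⁻¹ *ᵥ e)
    (xMIN : Fin n → ℝ) (hxMIN : xMIN = β⁻¹ • (A⁻¹ *ᵥ e))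
    (rbar : Fin n → ℝ) (ε : ℝ)
    (hε : rbar ⬝ᵥ A⁻¹ *ᵥ rbar - (rbar ⬝ᵥ A⁻¹ *ᵥ e) ^ 2 / β < ε)
    (D : ℝ)
    (hD : D = Real.sqrt ((rbar ⬝ᵥ A⁻¹ *ᵥ e) ^ 2 - β * (rbar ⬝ᵥ A⁻¹ *ᵥ rbar - ε)))
    (xWVaR : Fin n → ℝ)
    (hxWVaR : xWVaR = xMIN +
        D⁻¹ • ((A⁻¹ - β⁻¹ • vecMulVec (A⁻¹ *ᵥ e) (e ᵥ* A⁻¹)) *ᵥ rbar)) :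
    e ⬝ᵥ xWVaR = 1 ∧
    (∀ y : Fin n → ℝ, e ⬝ᵥ y = 1 →
      Real.sqrt ε * Real.sqrt (xWVaR ⬝ᵥ A *ᵥ xWVaR) - rbar ⬝ᵥ xWVaR ≤
        Real.sqrt ε * Real.sqrt (y ⬝ᵥ A *ᵥ y) - rbar ⬝ᵥ y) ∧
    Real.sqrt ε * Real.sqrt (xWVaR ⬝ᵥ A *ᵥ xWVaR) - rbar ⬝ᵥ xWVaR =
      (-(rbar ⬝ᵥ A⁻¹ *ᵥ e) + D) / β :=
  stmt6_general n hn A hA e he β hβ xMIN hxMIN rbar ε hε D hD xWVaR hxWVaR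
end

section
/- Let s* ∈ ℤ with 2 ≤ s* ≤ N − 1 and Δ ∈ ℝ. If max{0, B₋(s*)} ≤ Δ ≤ B₊(s*), then s* is a minimizer of the function s ↦ v_U(s; δ+Δ, φ) over {1, …, N}. -/
open Finset

/-- `v_U(s; δ, φ) = κσ²(1 − ρ + ρs + δ)/s − (Σ_{i=1}^s r̄_[i])/s + φs`. -/
noncomputable def vU (κ σ ρ δ φ : ℝ) (r : ℕ → ℝ) (s : ℕ) : ℝ :=
  κ * σ ^ 2 * (1 - ρ + ρ * s + δ) / s - (∑ i ∈ Finset.Icc 1 s, r i) / s + φ * s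

/-- `B₋(s*) = ρ − δ − 1 − (1/(κσ²)) min_{1 ≤ l < s*}
  ((l Σ_{i≤s*} r̄_[i] − s* Σ_{i≤l} r̄_[i])/(s* − l) − φ s* l)`. -/
noncomputable def Bminus (κ σ ρ δ φ : ℝ) (r : ℕ → ℝ) (sstar : ℕ) : ℝ :=
  ρ - δ - 1 - (1 / (κ * σ ^ 2)) *
    sInf {y : ℝ | ∃ l : ℕ, 1 ≤ l ∧ l < sstar ∧
      y = ((l : ℝ) * (∑ i ∈ Finset.Icc 1 sstar, r i)
            - (sstar : ℝ) * (∑ i ∈ Finset.Icc 1 l, r i)) / ((sstar : ℝ) - (l : ℝ))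
          - φ * (sstar : ℝ) * (l : ℝ)}

/-- `B₊(s*) = ρ − δ − 1 + (1/(κσ²)) min_{s* < l ≤ N}
  ((l Σ_{i≤s*} r̄_[i] − s* Σ_{i≤l} r̄_[i])/(l − s*) + φ s* l)`. -/
noncomputable def Bplus (N : ℕ) (κ σ ρ δ φ : ℝ) (r : ℕ → ℝ) (sstar : ℕ) : ℝ :=
  ρ - δ - 1 + (1 / (κ * σ ^ 2)) *
    sInf {y : ℝ | ∃ l : ℕ, sstar < l ∧ l ≤ N ∧
      y = ((l : ℝ) * (∑ i ∈ Finset.Icc 1 sstar, r i)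
            - (sstar : ℝ) * (∑ i ∈ Finset.Icc 1 l, r i)) / ((l : ℝ) - (sstar : ℝ))
          + φ * (sstar : ℝ) * (l : ℝ)}

/- Clearing the denominators `a b > 0`, `v_U(a) ≤ v_U(b)` becomes a linear condition
on `Δ`. For `l < s*` it is a lower bound on `Δ` and for `l > s*` an upper bound; `B₋(s*)` and
`B₊(s*)` are exactly the strongest of these bounds, so `Δ ∈ [B₋(s*), B₊(s*)]` makes `s*` beat
every competitor `l`. -/

section

variable {κ σ ρ δ φ : ℝ} {r : ℕ → ℝ}

theorem mul_mul_sub_vU {a b : ℕ} (ha : 0 < a) (hb : 0 < b) :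
    (a : ℝ) * b * (vU κ σ ρ δ φ r b - vU κ σ ρ δ φ r a) =
      b * (∑ i ∈ Icc 1 a, r i) - a * (∑ i ∈ Icc 1 b, r i)
        + (φ * a * b - κ * σ ^ 2 * (1 - ρ + δ)) * ((b : ℝ) - a) := by
  unfold vU
  field_simp
  ring

theorem vU_le_vU_iff {a b : ℕ} (ha : 0 < a) (hb : 0 < b) :
    vU κ σ ρ δ φ r a ≤ vU κ σ ρ δ φ r b ↔
      κ * σ ^ 2 * (1 - ρ + δ) * ((b : ℝ) - a) ≤
        b * (∑ i ∈ Icc 1 a, r i) - a * (∑ i ∈ Icc 1 b, r i) + φ * a * b * ((b : ℝ) - a) := by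
  have hab : (0 : ℝ) < a * b := by positivity
  rw [← sub_nonneg, ← mul_nonneg_iff_of_pos_left hab, mul_mul_sub_vU ha hb]
  constructor <;> intro h <;> linarith

theorem vU_le_vU_of_Bminus_le (hc : 0 < κ * σ ^ 2) {sstar l : ℕ} (hl : 1 ≤ l) (hls : l < sstar)
    {Δ : ℝ} (hΔ : Bminus κ σ ρ δ φ r sstar ≤ Δ) :
    vU κ σ ρ (δ + Δ) φ r sstar ≤ vU κ σ ρ (δ + Δ) φ r l := by
  set g : ℕ → ℝ := fun l => ((l : ℝ) * (∑ i ∈ Icc 1 sstar, r i)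
    - (sstar : ℝ) * (∑ i ∈ Icc 1 l, r i)) / ((sstar : ℝ) - l) - φ * sstar * l
  have hgap : (0 : ℝ) < (sstar : ℝ) - l := sub_pos.mpr (by exact_mod_cast hls)
  have hinf : sInf {y : ℝ | ∃ l : ℕ, 1 ≤ l ∧ l < sstar ∧ y = g l} ≤ g l := by
    refine csInf_le (Set.Finite.bddBelow ?_) ⟨l, hl, hls, rfl⟩
    refine ((Set.finite_Iio sstar).image g).subset ?_
    rintro y ⟨m, -, hm, rfl⟩
    exact ⟨m, hm, rfl⟩
  rw [Bminus, one_div_mul_eq_div, sub_le_comm, le_div_iff₀ hc] at hΔ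
  have hbound : (ρ - δ - 1 - Δ) * (κ * σ ^ 2) + φ * sstar * l ≤
      ((l : ℝ) * (∑ i ∈ Icc 1 sstar, r i) - sstar * (∑ i ∈ Icc 1 l, r i)) / ((sstar : ℝ) - l) := by
    linarith [hΔ.trans hinf]
  rw [le_div_iff₀ hgap] at hbound
  rw [vU_le_vU_iff (by omega) (by omega)]
  linarith

theorem vU_le_vU_of_le_Bplus (hc : 0 < κ * σ ^ 2) {N sstar l : ℕ} (hs : 0 < sstar)
    (hsl : sstar < l) (hlN : l ≤ N) {Δ : ℝ} (hΔ : Δ ≤ Bplus N κ σ ρ δ φ r sstar) :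
    vU κ σ ρ (δ + Δ) φ r sstar ≤ vU κ σ ρ (δ + Δ) φ r l := by
  set g : ℕ → ℝ := fun l => ((l : ℝ) * (∑ i ∈ Icc 1 sstar, r i)
    - (sstar : ℝ) * (∑ i ∈ Icc 1 l, r i)) / ((l : ℝ) - sstar) + φ * sstar * l
  have hgap : (0 : ℝ) < (l : ℝ) - sstar := sub_pos.mpr (by exact_mod_cast hsl)
  have hinf : sInf {y : ℝ | ∃ l : ℕ, sstar < l ∧ l ≤ N ∧ y = g l} ≤ g l := by
    refine csInf_le (Set.Finite.bddBelow ?_) ⟨l, hsl, hlN, rfl⟩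
    refine ((Set.finite_Iic N).image g).subset ?_
    rintro y ⟨m, -, hm, rfl⟩
    exact ⟨m, hm, rfl⟩
  rw [Bplus, one_div_mul_eq_div, ← sub_le_iff_le_add', le_div_iff₀ hc] at hΔ
  have hbound : (Δ - (ρ - δ - 1)) * (κ * σ ^ 2) - φ * sstar * l ≤
      ((l : ℝ) * (∑ i ∈ Icc 1 sstar, r i) - sstar * (∑ i ∈ Icc 1 l, r i)) / ((l : ℝ) - sstar) := by
    linarith [hΔ.trans hinf]
  rw [le_div_iff₀ hgap] at hbound
  rw [vU_le_vU_iff hs (by omega)]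
  linarith

end

theorem stmt11_general (N : ℕ) (κ σ ρ δ φ : ℝ)
    (hκ : 0 < κ) (hσ : 0 < σ)
    (r : ℕ → ℝ)
    (sstar : ℕ) (hs1 : 2 ≤ sstar)
    (Δ : ℝ) (hΔge : max 0 (Bminus κ σ ρ δ φ r sstar) ≤ Δ)
    (hΔle : Δ ≤ Bplus N κ σ ρ δ φ r sstar) :
    ∀ s : ℕ, 1 ≤ s → s ≤ N →
      vU κ σ ρ (δ + Δ) φ r sstar ≤ vU κ σ ρ (δ + Δ) φ r s := by
  intro s hs hsN
  have hc : 0 < κ * σ ^ 2 := by positivity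
  rcases lt_trichotomy s sstar with hlt | rfl | hgt
  · exact vU_le_vU_of_Bminus_le hc hs hlt ((le_max_right _ _).trans hΔge)
  · exact le_rfl
  · exact vU_le_vU_of_le_Bplus hc (by omega) hgt hsN hΔle

/-- Proposition 4, condition C2: if `max{0, B₋(s*)} ≤ Δ ≤ B₊(s*)`
then `s*` is a minimizer of `s ↦ v_U(s; δ+Δ, φ)` over `{1,…,N}`. -/
theorem stmt11 (N : ℕ) (hN : 3 ≤ N) (κ σ ρ δ φ : ℝ)
    (hκ : 0 < κ) (hσ : 0 < σ) (hρ1 : -1 < ρ) (hρ2 : ρ < 1) (hδ : 0 ≤ δ) (hφ : 0 < φ)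
    (r : ℕ → ℝ) (hr : ∀ i j : ℕ, 1 ≤ i → i ≤ j → j ≤ N → r j ≤ r i)
    (sstar : ℕ) (hs1 : 2 ≤ sstar) (hs2 : sstar ≤ N - 1)
    (Δ : ℝ) (hΔge : max 0 (Bminus κ σ ρ δ φ r sstar) ≤ Δ)
    (hΔle : Δ ≤ Bplus N κ σ ρ δ φ r sstar) :
    ∀ s : ℕ, 1 ≤ s → s ≤ N →
      vU κ σ ρ (δ + Δ) φ r sstar ≤ vU κ σ ρ (δ + Δ) φ r s :=
  stmt11_general N κ σ ρ δ φ hκ hσ r sstar hs1 Δ hΔge hΔle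
end
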